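/- If λ has the generalized logistic density p(λ) = (1/B(γ,η))·φ·e^(-φηλ)/(1+e^(-φλ))^(η+γ), then Var[λ] = (ψ'(γ) + ψ'(η))/φ², where ψ' is the trigamma function. -/

import Mathlib

open MeasureTheory Real

/-- The digamma function ψ = (log Γ)′. -/
noncomputable def digamma (x : ℝ) : ℝ :=
  deriv (fun y : ℝ => Real.log (Real.Gamma y)) x

/-- The trigamma function ψ′ = derivative of the digamma function. -/
noncomputable def trigamma (x : ℝ) : ℝ := deriv digamma x

/-!
Tilting the generalized logistic density by `exp (s λ)` gives, up to a constant, the density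
of the same family with parameters `γ + s/φ, η - s/φ`, and the substitution `u = σ(φλ)` (σ the
logistic sigmoid) turns the normalisation of that family into the Beta integral. Hence, for `s`
near `0`, the moment generating function is `B(γ + s/φ, η - s/φ) / B(γ, η)`, and the cumulant
generating function is `log Γ(γ + s/φ) + log Γ(η - s/φ)` up to a constant. Its second derivative
at `0`, which is the variance, is `(ψ'(γ) + ψ'(η)) / φ²`.
-/

open Set ProbabilityTheory
open scoped ENNReal Topology

lemma analyticAt_Gamma_of_pos {x : ℝ} (hx : 0 < x) : AnalyticAt ℝ Real.Gamma x := by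
  refine AnalyticAt.re_ofReal (f := Complex.Gamma) ?_
  rw [Complex.analyticAt_iff_eventually_differentiableAt]
  have hre : {z : ℂ | 0 < z.re} ∈ 𝓝 (x : ℂ) :=
    (isOpen_lt continuous_const Complex.continuous_re).mem_nhds (by simpa using hx)
  filter_upwards [hre] with z (hz : 0 < z.re)
  exact Complex.differentiableAt_Gamma z fun m hm => by
    simp [hm] at hz
    linarith [m.cast_nonneg (α := ℝ)]

lemma analyticAt_log_Gamma {x : ℝ} (hx : 0 < x) :
    AnalyticAt ℝ (fun y => Real.log (Real.Gamma y)) x :=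
  (analyticAt_Gamma_of_pos hx).log (Real.Gamma_pos_of_pos hx)

lemma hasDerivAt_log_Gamma {x : ℝ} (hx : 0 < x) :
    HasDerivAt (fun y => Real.log (Real.Gamma y)) (digamma x) x :=
  (analyticAt_log_Gamma hx).differentiableAt.hasDerivAt

lemma hasDerivAt_digamma {x : ℝ} (hx : 0 < x) : HasDerivAt digamma (trigamma x) x :=
  (analyticAt_log_Gamma hx).deriv.differentiableAt.hasDerivAt

lemma hasDerivAt_comp_add_div {f : ℝ → ℝ} {f' c s : ℝ} (φ : ℝ)
    (hf : HasDerivAt f f' (c + s / φ)) :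
    HasDerivAt (fun t => f (c + t / φ)) (f' / φ) s :=
  (hf.comp s (((hasDerivAt_id s).div_const φ).const_add c)).congr_deriv (mul_one_div f' φ)

lemma hasDerivAt_comp_sub_div {f : ℝ → ℝ} {f' c s : ℝ} (φ : ℝ)
    (hf : HasDerivAt f f' (c - s / φ)) :
    HasDerivAt (fun t => f (c - t / φ)) (-(f' / φ)) s :=
  (hf.comp s (((hasDerivAt_id s).div_const φ).const_sub c)).congr_deriv (by ring)

lemma integrable_and_integral_eq_of_lintegral_ofReal_eq {α : Type*} [MeasurableSpace α]
    {μ : Measure α} {f : α → ℝ} (hf : AEStronglyMeasurable f μ) (hf0 : 0 ≤ᵐ[μ] f) {c : ℝ}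
    (hc : 0 ≤ c) (h : ∫⁻ x, ENNReal.ofReal (f x) ∂μ = ENNReal.ofReal c) :
    Integrable f μ ∧ ∫ x, f x ∂μ = c :=
  ⟨⟨hf, (hasFiniteIntegral_iff_ofReal hf0).2 (h ▸ ENNReal.ofReal_lt_top)⟩,
    by rw [integral_eq_lintegral_of_nonneg_ae hf0 hf, h, ENNReal.toReal_ofReal hc]⟩

lemma integral_sub_integral_sq_eq_iteratedDeriv_two_cgf {Ω : Type*} [MeasurableSpace Ω]
    {μ : Measure Ω} [IsProbabilityMeasure μ] {X : Ω → ℝ}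
    (h : 0 ∈ interior (integrableExpSet X μ)) :
    ∫ ω, (X ω - μ[X]) ^ 2 ∂μ = iteratedDeriv 2 (cgf X μ) 0 := by
  simp [iteratedDeriv_two_cgf_eq_integral h, deriv_cgf_zero h]

lemma lintegral_Ioo_rpow_mul_one_sub_rpow {a b : ℝ} (ha : 0 < a) (hb : 0 < b) :
    ∫⁻ u in Ioo 0 1, ENNReal.ofReal (u ^ (a - 1) * (1 - u) ^ (b - 1)) =
      ENNReal.ofReal (beta a b) := by
  have h := lintegral_betaPDF_eq_one ha hb
  have hB := beta_pos ha hb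
  simp_rw [lintegral_betaPDF, mul_assoc, ENNReal.ofReal_mul (one_div_pos.2 hB).le] at h
  rw [lintegral_const_mul _ (by fun_prop), one_div, ENNReal.ofReal_inv_of_pos hB] at h
  simpa using ENNReal.eq_inv_of_mul_eq_one_left ((mul_comm _ _).trans h)

lemma sigmoid_rpow_mul_one_sub_sigmoid_rpow (y a b : ℝ) :
    sigmoid y ^ a * (1 - sigmoid y) ^ b = exp (-(b * y)) / (1 + exp (-y)) ^ (a + b) := by
  have hσ := sigmoid_pos y
  rw [← sigmoid_neg, ← sigmoid_mul_rexp_neg, mul_rpow hσ.le (exp_pos _).le, ← mul_assoc,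
    ← rpow_add hσ, ← exp_mul, sigmoid_def, inv_rpow (by positivity), mul_comm (-y)]
  ring_nf

lemma lintegral_exp_div_one_add_exp_rpow {φ a b : ℝ} (hφ : 0 < φ) (ha : 0 < a) (hb : 0 < b) :
    ∫⁻ x, ENNReal.ofReal (φ * exp (-(φ * b * x)) / (1 + exp (-(φ * x))) ^ (a + b)) =
      ENNReal.ofReal (beta a b) := by
  have hrange : (fun x => sigmoid (φ * x)) '' univ = Ioo 0 1 := by
    rw [image_univ, ← range_sigmoid, ← Function.comp_def,
      (mul_left_surjective₀ hφ.ne').range_comp]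
  have hderiv : ∀ x ∈ univ, HasDerivWithinAt (fun x => sigmoid (φ * x))
      (sigmoid (φ * x) * (1 - sigmoid (φ * x)) * φ) univ x := fun x _ =>
    ((hasDerivAt_sigmoid _).comp x
      ((hasDerivAt_id x).const_mul φ |>.congr_deriv (mul_one φ))).hasDerivWithinAt
  have hinj : InjOn (fun x => sigmoid (φ * x)) univ :=
    (sigmoid_injective.comp (mul_right_injective₀ hφ.ne')).injOn
  rw [← lintegral_Ioo_rpow_mul_one_sub_rpow ha hb, ← hrange,
    lintegral_image_eq_lintegral_abs_deriv_mul MeasurableSet.univ hderiv hinj,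
    Measure.restrict_univ]
  refine lintegral_congr fun x => ?_
  have hσ := sigmoid_pos (φ * x)
  have hσ' : 0 < 1 - sigmoid (φ * x) := sub_pos.2 (sigmoid_lt_one _)
  rw [← ENNReal.ofReal_mul (abs_nonneg _), abs_of_pos (by positivity)]
  congr 1
  calc φ * exp (-(φ * b * x)) / (1 + exp (-(φ * x))) ^ (a + b)
      = φ * (sigmoid (φ * x) ^ a * (1 - sigmoid (φ * x)) ^ b) := by
        rw [sigmoid_rpow_mul_one_sub_sigmoid_rpow]
        ring_nf
    _ = _ := by
        rw [rpow_sub_one hσ.ne', rpow_sub_one hσ'.ne']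
        field_simp

noncomputable def genLogisticPDFReal (φ a b x : ℝ) : ℝ :=
  φ * exp (-(φ * b * x)) / (1 + exp (-(φ * x))) ^ (a + b) / beta a b

noncomputable def genLogisticMeasure (φ a b : ℝ) : Measure ℝ :=
  volume.withDensity fun x => ENNReal.ofReal (genLogisticPDFReal φ a b x)

section GenLogistic

variable {φ a b : ℝ}

lemma genLogisticPDFReal_nonneg (hφ : 0 < φ) (ha : 0 < a) (hb : 0 < b) (x : ℝ) :
    0 ≤ genLogisticPDFReal φ a b x := by
  have := beta_pos ha hb
  unfold genLogisticPDFReal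
  positivity

@[fun_prop]
lemma measurable_genLogisticPDFReal : Measurable (genLogisticPDFReal φ a b) := by
  unfold genLogisticPDFReal
  fun_prop

lemma lintegral_genLogisticPDFReal (hφ : 0 < φ) (ha : 0 < a) (hb : 0 < b) :
    ∫⁻ x, ENNReal.ofReal (genLogisticPDFReal φ a b x) = 1 := by
  have hB := beta_pos ha hb
  simp_rw [genLogisticPDFReal, ENNReal.ofReal_div_of_pos hB, div_eq_mul_inv _ (ENNReal.ofReal _)]
  rw [lintegral_mul_const' _ _ (by simp [hB]), ← div_eq_mul_inv,
    lintegral_exp_div_one_add_exp_rpow hφ ha hb, ENNReal.div_self (by simp [hB]) (by simp)]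

lemma isProbabilityMeasure_genLogisticMeasure (hφ : 0 < φ) (ha : 0 < a) (hb : 0 < b) :
    IsProbabilityMeasure (genLogisticMeasure φ a b) :=
  ⟨by rw [genLogisticMeasure, withDensity_apply _ MeasurableSet.univ, Measure.restrict_univ,
    lintegral_genLogisticPDFReal hφ ha hb]⟩

lemma integral_genLogisticMeasure (hφ : 0 < φ) (ha : 0 < a) (hb : 0 < b) (g : ℝ → ℝ) :
    ∫ x, g x ∂genLogisticMeasure φ a b = ∫ x, genLogisticPDFReal φ a b x * g x := by
  rw [genLogisticMeasure, integral_withDensity_eq_integral_toReal_smul (by fun_prop)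
    (ae_of_all _ fun _ => ENNReal.ofReal_lt_top)]
  simp_rw [ENNReal.toReal_ofReal (genLogisticPDFReal_nonneg hφ ha hb _), smul_eq_mul]

lemma integrable_genLogisticMeasure_iff (hφ : 0 < φ) (ha : 0 < a) (hb : 0 < b) {g : ℝ → ℝ} :
    Integrable g (genLogisticMeasure φ a b) ↔
      Integrable (fun x => genLogisticPDFReal φ a b x * g x) := by
  rw [genLogisticMeasure, integrable_withDensity_iff_integrable_smul' (by fun_prop)
    (ae_of_all _ fun _ => ENNReal.ofReal_lt_top)]
  simp_rw [ENNReal.toReal_ofReal (genLogisticPDFReal_nonneg hφ ha hb _), smul_eq_mul]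

lemma add_div_pos_and_sub_div_pos_of_mem_Ioo (hφ : 0 < φ) {s : ℝ}
    (hs : s ∈ Ioo (-(φ * a)) (φ * b)) :
    0 < a + s / φ ∧ 0 < b - s / φ := by
  constructor
  · have : -a < s / φ := by rw [lt_div_iff₀ hφ]; linarith [hs.1]
    linarith
  · have : s / φ < b := by rw [div_lt_iff₀ hφ]; linarith [hs.2]
    linarith

lemma exp_mul_genLogisticPDFReal (hφ : φ ≠ 0) {s : ℝ} (hs : beta (a + s / φ) (b - s / φ) ≠ 0)
    (x : ℝ) :
    exp (s * x) * genLogisticPDFReal φ a b x =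
      beta (a + s / φ) (b - s / φ) / beta a b *
        genLogisticPDFReal φ (a + s / φ) (b - s / φ) x := by
  have hexp : exp (s * x) * exp (-(φ * b * x)) = exp (-(φ * (b - s / φ) * x)) := by
    rw [← exp_add]
    field_simp
    ring_nf
  simp only [genLogisticPDFReal, add_add_sub_cancel]
  rw [← hexp]
  generalize beta (a + s / φ) (b - s / φ) = B' at hs ⊢
  field_simp

lemma lintegral_exp_mul_genLogisticMeasure (hφ : 0 < φ) (ha : 0 < a) (hb : 0 < b) {s : ℝ}
    (hs : s ∈ Ioo (-(φ * a)) (φ * b)) :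
    ∫⁻ x, ENNReal.ofReal (exp (s * x)) ∂genLogisticMeasure φ a b =
      ENNReal.ofReal (beta (a + s / φ) (b - s / φ) / beta a b) := by
  obtain ⟨ha', hb'⟩ := add_div_pos_and_sub_div_pos_of_mem_Ioo hφ hs
  have hB := beta_pos ha hb
  have hB' := beta_pos ha' hb'
  rw [genLogisticMeasure, lintegral_withDensity_eq_lintegral_mul _ (by fun_prop) (by fun_prop)]
  simp_rw [Pi.mul_apply, ← ENNReal.ofReal_mul (genLogisticPDFReal_nonneg hφ ha hb _),
    mul_comm _ (exp _), exp_mul_genLogisticPDFReal hφ.ne' hB'.ne',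
    ENNReal.ofReal_mul (div_pos hB' hB).le]
  rw [lintegral_const_mul _ (by fun_prop), lintegral_genLogisticPDFReal hφ ha' hb', mul_one]

lemma integrable_exp_mul_and_mgf_genLogisticMeasure (hφ : 0 < φ) (ha : 0 < a) (hb : 0 < b)
    {s : ℝ} (hs : s ∈ Ioo (-(φ * a)) (φ * b)) :
    Integrable (fun x => exp (s * x)) (genLogisticMeasure φ a b) ∧
      mgf id (genLogisticMeasure φ a b) s = beta (a + s / φ) (b - s / φ) / beta a b := by
  obtain ⟨ha', hb'⟩ := add_div_pos_and_sub_div_pos_of_mem_Ioo hφ hs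
  exact integrable_and_integral_eq_of_lintegral_ofReal_eq (by fun_prop)
    (ae_of_all _ fun x => (exp_pos _).le) (div_pos (beta_pos ha' hb') (beta_pos ha hb)).le
    (lintegral_exp_mul_genLogisticMeasure hφ ha hb hs)

lemma zero_mem_interior_integrableExpSet_genLogisticMeasure (hφ : 0 < φ) (ha : 0 < a)
    (hb : 0 < b) : 0 ∈ interior (integrableExpSet id (genLogisticMeasure φ a b)) :=
  mem_interior_iff_mem_nhds.2 <| Filter.mem_of_superset
    (Ioo_mem_nhds (neg_neg_of_pos (mul_pos hφ ha)) (mul_pos hφ hb))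
    fun _ hs => (integrable_exp_mul_and_mgf_genLogisticMeasure hφ ha hb hs).1

lemma cgf_genLogisticMeasure (hφ : 0 < φ) (ha : 0 < a) (hb : 0 < b) {s : ℝ}
    (hs : s ∈ Ioo (-(φ * a)) (φ * b)) :
    cgf id (genLogisticMeasure φ a b) s = log (Gamma (a + s / φ)) + log (Gamma (b - s / φ)) -
      log (Gamma (a + b)) - log (beta a b) := by
  obtain ⟨ha', hb'⟩ := add_div_pos_and_sub_div_pos_of_mem_Ioo hφ hs
  have := Gamma_pos_of_pos ha'
  have := Gamma_pos_of_pos hb'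
  have := Gamma_pos_of_pos (add_pos ha hb)
  rw [cgf, (integrable_exp_mul_and_mgf_genLogisticMeasure hφ ha hb hs).2,
    log_div (beta_pos ha' hb').ne' (beta_pos ha hb).ne', beta, add_add_sub_cancel,
    log_div (by positivity) (by positivity), log_mul (by positivity) (by positivity)]

lemma hasDerivAt_cgf_genLogisticMeasure (hφ : 0 < φ) (ha : 0 < a) (hb : 0 < b) {s : ℝ}
    (hs : s ∈ Ioo (-(φ * a)) (φ * b)) :
    HasDerivAt (cgf id (genLogisticMeasure φ a b))
      ((digamma (a + s / φ) - digamma (b - s / φ)) / φ) s := by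
  obtain ⟨ha', hb'⟩ := add_div_pos_and_sub_div_pos_of_mem_Ioo hφ hs
  have hcgf : cgf id (genLogisticMeasure φ a b) =ᶠ[𝓝 s] fun t => log (Gamma (a + t / φ)) +
      log (Gamma (b - t / φ)) - log (Gamma (a + b)) - log (beta a b) := by
    filter_upwards [isOpen_Ioo.mem_nhds hs] with t ht using cgf_genLogisticMeasure hφ ha hb ht
  refine HasDerivAt.congr_of_eventuallyEq ?_ hcgf
  exact ((((hasDerivAt_comp_add_div φ (hasDerivAt_log_Gamma ha')).add
    (hasDerivAt_comp_sub_div φ (hasDerivAt_log_Gamma hb'))).sub_const _).sub_const _).congr_deriv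
    (by ring)

lemma iteratedDeriv_two_cgf_genLogisticMeasure_zero (hφ : 0 < φ) (ha : 0 < a) (hb : 0 < b) :
    iteratedDeriv 2 (cgf id (genLogisticMeasure φ a b)) 0 =
      (trigamma a + trigamma b) / φ ^ 2 := by
  have h0 : (0 : ℝ) ∈ Ioo (-(φ * a)) (φ * b) := ⟨neg_neg_of_pos (mul_pos hφ ha), mul_pos hφ hb⟩
  have hderiv : deriv (cgf id (genLogisticMeasure φ a b)) =ᶠ[𝓝 0]
      fun s => (digamma (a + s / φ) - digamma (b - s / φ)) / φ := by
    filter_upwards [isOpen_Ioo.mem_nhds h0] with s hs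
    exact (hasDerivAt_cgf_genLogisticMeasure hφ ha hb hs).deriv
  have hda : HasDerivAt digamma (trigamma a) (a + 0 / φ) := by
    simpa using hasDerivAt_digamma ha
  have hdb : HasDerivAt digamma (trigamma b) (b - 0 / φ) := by
    simpa using hasDerivAt_digamma hb
  rw [iteratedDeriv_succ, iteratedDeriv_one, hderiv.deriv_eq,
    (((hasDerivAt_comp_add_div φ hda).fun_sub (hasDerivAt_comp_sub_div φ hdb)).div_const φ).deriv]
  ring

end GenLogistic

/-- If λ has the generalized logistic density
p(λ) = (1/B(γ,η))·φ·e^(-φηλ)/(1+e^(-φλ))^(η+γ), then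
Var[λ] = (ψ'(γ) + ψ'(η))/φ². -/
theorem GL_variance (φ η γ : ℝ) (hφ : 0 < φ) (hη : 0 < η) (hγ : 0 < γ)
    (p : ℝ → ℝ)
    (hp : p = fun l =>
      (Real.Gamma (γ + η) / (Real.Gamma γ * Real.Gamma η)) *
        (φ * Real.exp (-(φ * η * l)) / (1 + Real.exp (-(φ * l))) ^ (η + γ)))
    (m : ℝ) (hm : m = ∫ l : ℝ, l * p l) :
    Integrable (fun l : ℝ => (l - m) ^ 2 * p l) ∧
      ∫ l : ℝ, (l - m) ^ 2 * p l = (trigamma γ + trigamma η) / φ ^ 2 := by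
  have hpdf : p = genLogisticPDFReal φ γ η := by
    ext l
    rw [hp, genLogisticPDFReal, beta, add_comm η γ, div_div_eq_mul_div]
    ring
  have := isProbabilityMeasure_genLogisticMeasure hφ hγ hη
  have h0 := zero_mem_interior_integrableExpSet_genLogisticMeasure hφ hγ hη
  have hmean : m = (genLogisticMeasure φ γ η)[id] := by
    rw [hm, integral_genLogisticMeasure hφ hγ hη, hpdf]
    simp_rw [mul_comm (genLogisticPDFReal φ γ η _), id]
  have hvar : (fun l => (l - m) ^ 2 * p l) =
      fun l => genLogisticPDFReal φ γ η l * (id l - (genLogisticMeasure φ γ η)[id]) ^ 2 := by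
    rw [hpdf, ← hmean]
    simp_rw [mul_comm (genLogisticPDFReal φ γ η _), id]
  rw [hvar, ← integrable_genLogisticMeasure_iff hφ hγ hη, ← integral_genLogisticMeasure hφ hγ hη,
    integral_sub_integral_sq_eq_iteratedDeriv_two_cgf h0,
    iteratedDeriv_two_cgf_genLogisticMeasure_zero hφ hγ hη]
  exact ⟨((memLp_of_mem_interior_integrableExpSet h0 2).sub (memLp_const _)).integrable_sq, rfl⟩
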